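/- Let R be a commutative ring with identity, let A = (a_{ij}) be an n×n matrix over R, and let k, m₁,…,m_n be nonnegative integers with m₁ < m₂ < ⋯ < m_n ≤ k. Then the coefficient of x₁^k⋯x_n^k in per((a_{ij} x_j^{m_i})) · ∏_{1≤i<j≤n}(x_j − x_i) · (x₁+⋯+x_n)^{kn − C(n,2) − ∑ m_i} equals (−1)^{C(n,2)} · (kn − C(n,2) − ∑_{i=1}^n m_i)! / ∏_{i=1}^n ∏_{j} (j − m_i) times det(A), where the inner product is over m_i < j ≤ k with j ∉ {m_s : i < s ≤ n}. -/

import Mathlib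

/-!
Expanding the permanent, its `σ`-term is `∏ A i (σ i)` times the image of `x^m` under the
permutation `σ` of the variables. The Vandermonde product `V` is alternating while `x^(k,…,k)`
and `(∑ xᵢ)^N` are symmetric, so the `σ`-term contributes `sign σ · ∏ A i (σ i)` times the
coefficient `c` of `x^(k,…,k)` in `x^m · V · (∑ xᵢ)^N`, and the permanent turns into `det A`.

Expanding `V` as a determinant and `(∑ xᵢ)^N` by the multinomial theorem gives
`c · ∏ (k - mᵢ)! = N! · det ((k - mᵢ).descFactorial j)`, a Vandermonde determinant in the
`k - mᵢ`, equal to `(-1)^C(n,2) · N! · ∏_{i<j} (m_j - m_i)`. Finally, `∏_{s>i} (m_s - m_i)` times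
the product over the gaps `j ∈ (mᵢ, k]`, `j ∉ {m_s : s > i}`, is `(k - mᵢ)!`, which turns this
into the stated quotient.
-/

open MvPolynomial Finset

/-- The permanent of a square matrix. -/
def perMatrix {n : ℕ} {S : Type*} [CommRing S] (M : Matrix (Fin n) (Fin n) S) : S :=
  ∑ σ : Equiv.Perm (Fin n), ∏ i, M i (σ i)

open Equiv Matrix

section SumXPow

variable {ι R : Type*} [Fintype ι] [CommSemiring R]

lemma prod_X_pow_eq_monomial_equivFunOnFinite (d : ι → ℕ) :
    ∏ i, (X i : MvPolynomial ι R) ^ d i = monomial (Finsupp.equivFunOnFinite.symm d) 1 := by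
  rw [prod_X_pow]
  congr
  ext i
  exact Finsupp.indicator_of_mem (mem_univ i) _

lemma coeff_prod_X_pow_mul_sum_X_pow (c d : ι → ℕ) (N : ℕ) :
    coeff (Finsupp.equivFunOnFinite.symm c) ((∏ i, X i ^ d i) * (∑ i, X i) ^ N) =
      if (∀ i, d i ≤ c i) ∧ ∑ i, (c i - d i) = N then (Nat.multinomial univ (c - d) : R)
      else 0 := by
  rw [prod_X_pow_eq_monomial_equivFunOnFinite, coeff_monomial_mul', coeff_sum_X_pow_of_fintype]
  have hsub : Finsupp.equivFunOnFinite.symm c - Finsupp.equivFunOnFinite.symm d =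
      Finsupp.equivFunOnFinite.symm (c - d) := by
    ext; simp
  have hsum : (Finsupp.equivFunOnFinite.symm (c - d)).sum (fun _ m ↦ m) = ∑ i, (c i - d i) := by
    simp [Finsupp.sum_fintype]
  rw [hsub, hsum, ← Finsupp.multinomial_of_support_subset (subset_univ _)]
  simp [Finsupp.le_def, ite_and]

lemma coeff_const_rename_mul (k : ℕ) (σ : Perm ι) {q : MvPolynomial ι R} (hq : q.IsSymmetric)
    (p : MvPolynomial ι R) :
    coeff (Finsupp.equivFunOnFinite.symm fun _ ↦ k) (rename σ p * q) =
      coeff (Finsupp.equivFunOnFinite.symm fun _ ↦ k) (p * q) := by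
  have hc : (Finsupp.equivFunOnFinite.symm fun _ ↦ k).mapDomain σ =
      Finsupp.equivFunOnFinite.symm fun _ : ι ↦ k := by
    ext; simp [Finsupp.mapDomain_equiv_apply]
  rw [← coeff_rename_mapDomain σ σ.injective (p * q), hc, map_mul, hq σ]

lemma isSymmetric_sum_X_pow (N : ℕ) :
    ((∑ i, X i : MvPolynomial ι R) ^ N).IsSymmetric :=
  (symmetricSubalgebra ι R).pow_mem (psum_one ι R ▸ psum_isSymmetric ι R 1) N

end SumXPow

section Alternating

variable {n : ℕ} {R : Type*} [CommRing R]

lemma rename_det_vandermonde_X (σ : Perm (Fin n)) :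
    rename σ (vandermonde (X : Fin n → MvPolynomial (Fin n) R)).det =
      (Perm.sign σ : ℤ) • (vandermonde (X : Fin n → MvPolynomial (Fin n) R)).det := by
  rw [← AlgHom.coe_toRingHom, RingHom.map_det, zsmul_eq_mul, ← det_permute]
  congr 1
  ext i j
  simp [vandermonde_apply]

lemma perMatrix_of_C_mul_X_pow (A : Matrix (Fin n) (Fin n) R) (m : Fin n → ℕ) :
    perMatrix (of fun i j ↦ (C (A i j) * X j ^ m i : MvPolynomial (Fin n) R)) =
      ∑ σ : Perm (Fin n), C (∏ i, A i (σ i)) * rename σ (∏ i, X i ^ m i) := by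
  simp [perMatrix, prod_mul_distrib, map_prod]

lemma coeff_const_perMatrix_mul_alternating (A : Matrix (Fin n) (Fin n) R) (m : Fin n → ℕ)
    (k : ℕ) {V q : MvPolynomial (Fin n) R}
    (hV : ∀ σ : Perm (Fin n), rename σ V = (Perm.sign σ : ℤ) • V) (hq : q.IsSymmetric) :
    coeff (Finsupp.equivFunOnFinite.symm fun _ ↦ k)
        (perMatrix (of fun i j ↦ C (A i j) * X j ^ m i) * V * q) =
      A.det * coeff (Finsupp.equivFunOnFinite.symm fun _ ↦ k) ((∏ i, X i ^ m i) * V * q) := by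
  have hterm (σ : Perm (Fin n)) :
      C (∏ i, A i (σ i)) * rename σ (∏ i, X i ^ m i) * V * q =
        (Perm.sign σ : ℤ) • (C (∏ i, A i (σ i)) * (rename σ ((∏ i, X i ^ m i) * V) * q)) := by
    have hsign : ((Perm.sign σ : ℤ) * (Perm.sign σ : ℤ)) = 1 := by
      rw [← Units.val_mul, Int.units_mul_self, Units.val_one]
    rw [map_mul, hV]
    simp only [smul_mul_assoc, mul_smul_comm, smul_smul, hsign, one_smul]
    ring
  rw [perMatrix_of_C_mul_X_pow, sum_mul, sum_mul, coeff_sum]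
  simp only [hterm, coeff_smul, coeff_C_mul, coeff_const_rename_mul k _ hq]
  rw [← det_transpose, det_apply, sum_mul]
  refine sum_congr rfl fun σ _ ↦ ?_
  simp [Units.smul_def, mul_assoc]

end Alternating

lemma Equiv.Perm.sum_val_eq_choose_two {n : ℕ} (τ : Perm (Fin n)) :
    ∑ i, (τ i : ℕ) = n.choose 2 := by
  rw [Equiv.sum_comp τ (fun i ↦ (i : ℕ)), Fin.sum_univ_eq_sum_range (fun i ↦ i),
    sum_range_id, Nat.choose_two_right]

lemma Fin.sum_card_Ioi (n : ℕ) : ∑ i : Fin n, #(Ioi i) = n.choose 2 := by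
  have := (Fin.revPerm (n := n)).sum_val_eq_choose_two
  simp only [Fin.revPerm_apply, Fin.val_rev] at this
  simp only [Fin.card_Ioi]
  convert this using 2
  omega

lemma Fin.prod_prod_Ioi_neg {n : ℕ} {R : Type*} [CommRing R] (f : Fin n → Fin n → R) :
    ∏ i, ∏ j ∈ Ioi i, -f i j = (-1) ^ n.choose 2 * ∏ i, ∏ j ∈ Ioi i, f i j := by
  simp_rw [prod_neg, prod_mul_distrib, prod_pow_eq_pow_sum, Fin.sum_card_Ioi]

section AlternatingMultinomial

variable {n : ℕ}

def alternatingMultinomialSum (a : Fin n → ℕ) : ℤ :=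
  ∑ τ : Perm (Fin n), Perm.sign τ *
    if ∀ i, (τ i : ℕ) ≤ a i then (Nat.multinomial univ (fun i : Fin n ↦ a i - τ i) : ℤ) else 0

lemma coeff_prod_X_pow_mul_det_vandermonde_mul_sum_X_pow {R : Type*} [CommRing R]
    (c e : Fin n → ℕ) (he : ∀ i, e i ≤ c i) :
    coeff (Finsupp.equivFunOnFinite.symm c)
        ((∏ i, X i ^ e i : MvPolynomial (Fin n) R) * (vandermonde X).det *
          (∑ i, X i) ^ (∑ i, (c i - e i) - n.choose 2)) =
      (alternatingMultinomialSum (fun i ↦ c i - e i) : R) := by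
  have hV : (vandermonde (X : Fin n → MvPolynomial (Fin n) R)).det =
      ∑ τ : Perm (Fin n), (Perm.sign τ : ℤ) • ∏ i, X i ^ (τ i : ℕ) := by
    rw [← det_transpose, det_apply]
    rfl
  rw [hV, mul_sum, sum_mul, coeff_sum, alternatingMultinomialSum, Int.cast_sum]
  refine sum_congr rfl fun τ _ ↦ ?_
  rw [mul_smul_comm, smul_mul_assoc, coeff_smul, ← prod_mul_distrib]
  simp_rw [← pow_add]
  rw [coeff_prod_X_pow_mul_sum_X_pow]
  have hle : (∀ i, e i + τ i ≤ c i) ↔ ∀ i, (τ i : ℕ) ≤ c i - e i :=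
    forall_congr' fun i ↦ by have := he i; omega
  by_cases hτ : ∀ i, (τ i : ℕ) ≤ c i - e i
  · have hsum : ∑ i, (c i - (e i + τ i)) = ∑ i, (c i - e i) - n.choose 2 := by
      simp_rw [← Nat.sub_sub]
      rw [sum_tsub_distrib _ fun i _ ↦ hτ i, τ.sum_val_eq_choose_two]
    simp [hle.mpr hτ, hτ, hsum, Pi.sub_def, Nat.sub_sub]
  · simp [hle, hτ]

lemma multinomial_sub_mul_prod_factorial {ι : Type*} [Fintype ι] (a b : ι → ℕ)
    (hb : ∀ i, b i ≤ a i) :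
    Nat.multinomial univ (fun i ↦ a i - b i) * ∏ i, (a i).factorial =
      (∑ i, a i - ∑ i, b i).factorial * ∏ i, (a i).descFactorial (b i) := by
  rw [← sum_tsub_distrib _ fun i _ ↦ hb i, ← Nat.multinomial_spec]
  simp_rw [← Nat.factorial_mul_descFactorial (hb _), prod_mul_distrib]
  ring

lemma det_of_descFactorial (a : Fin n → ℕ) :
    det (of fun i j : Fin n ↦ ((a i).descFactorial j : ℤ)) =
      ∏ i, ∏ j ∈ Ioi i, ((a j : ℤ) - a i) := by
  rw [← det_vandermonde, det_eval_matrixOfPolynomials_eq_det_vandermonde _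
    (fun j ↦ descPochhammer ℤ j) (fun j ↦ descPochhammer_natDegree ℤ j)
    (fun j ↦ monic_descPochhammer ℤ j)]
  simp [descPochhammer_eval_eq_descFactorial]

lemma alternatingMultinomialSum_mul_prod_factorial (a : Fin n → ℕ) :
    alternatingMultinomialSum a * ∏ i, ((a i).factorial : ℤ) =
      (∑ i, a i - n.choose 2).factorial * ∏ i, ∏ j ∈ Ioi i, ((a j : ℤ) - a i) := by
  rw [← det_of_descFactorial, ← det_transpose, det_apply, alternatingMultinomialSum, sum_mul,
    mul_sum]
  refine sum_congr rfl fun τ _ ↦ ?_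
  simp only [transpose_apply, of_apply, Units.smul_def, zsmul_eq_mul]
  by_cases hτ : ∀ i, (τ i : ℕ) ≤ a i
  · have h := multinomial_sub_mul_prod_factorial a (fun i ↦ τ i) hτ
    rw [τ.sum_val_eq_choose_two] at h
    rw [if_pos hτ, mul_assoc, ← Nat.cast_prod, ← Nat.cast_mul, h]
    push_cast
    ring
  · obtain ⟨i, hi⟩ := not_forall.mp hτ
    have h0 : ∏ i, ((a i).descFactorial (τ i) : ℤ) = 0 :=
      prod_eq_zero (mem_univ i) (by simp [Nat.descFactorial_of_lt (not_le.mp hi)])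
    simp [hτ, h0]

end AlternatingMultinomial

lemma Nat.prod_Ioc_sub_eq_factorial (a k : ℕ) : ∏ j ∈ Ioc a k, (j - a) = (k - a).factorial := by
  induction k with
  | zero => simp
  | succ k ih =>
    by_cases h : a ≤ k
    · rw [prod_Ioc_succ_top h, ih, Nat.succ_sub h, Nat.factorial_succ, mul_comm]
    · rw [Ioc_eq_empty (by omega), prod_empty, show k + 1 - a = 0 by omega, Nat.factorial_zero]

section Gaps

variable {n k : ℕ} {m : Fin n → ℕ}

lemma prod_gaps_mul_prod_Ioi_sub (hmono : StrictMono m) (hk : ∀ i, m i ≤ k) (i : Fin n) :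
    (∏ j ∈ (Ioc (m i) k).filter (fun j ↦ ∀ s : Fin n, i < s → j ≠ m s), (j - m i)) *
      ∏ s ∈ Ioi i, (m s - m i) = (k - m i).factorial := by
  have himage :
      (Ioc (m i) k).filter (fun j ↦ ¬∀ s : Fin n, i < s → j ≠ m s) = (Ioi i).image m := by
    ext j
    simp only [mem_filter, mem_Ioc, mem_image, mem_Ioi, not_forall, not_not]
    constructor
    · rintro ⟨-, s, hs, rfl⟩
      exact ⟨s, hs, rfl⟩
    · rintro ⟨s, hs, rfl⟩
      exact ⟨⟨hmono hs, hk s⟩, s, hs, rfl⟩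
  rw [← prod_image (f := fun j ↦ j - m i) fun a _ b _ h ↦ hmono.injective h, ← himage,
    prod_filter_mul_prod_filter_not, Nat.prod_Ioc_sub_eq_factorial]

lemma alternatingMultinomialSum_mul_prod_gaps (hmono : StrictMono m) (hk : ∀ i, m i ≤ k) :
    alternatingMultinomialSum (fun i ↦ k - m i) *
        (∏ i, ∏ j ∈ (Ioc (m i) k).filter (fun j ↦ ∀ s : Fin n, i < s → j ≠ m s), (j - m i) : ℕ) =
      (-1) ^ n.choose 2 * (∑ i, (k - m i) - n.choose 2).factorial := by
  set Δ : ℕ := ∏ i, ∏ j ∈ Ioi i, (m j - m i)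
  have hΔ : (Δ : ℤ) ≠ 0 := by
    refine Nat.cast_ne_zero.mpr <| prod_ne_zero_iff.mpr fun i _ ↦ prod_ne_zero_iff.mpr fun j hj ↦ ?_
    exact Nat.sub_ne_zero_of_lt (hmono (mem_Ioi.mp hj))
  have hdiff :
      ∏ i, ∏ j ∈ Ioi i, (((k - m j : ℕ) : ℤ) - (k - m i : ℕ)) = (-1) ^ n.choose 2 * Δ := by
    simp only [Δ, Nat.cast_prod]
    rw [← Fin.prod_prod_Ioi_neg]
    refine prod_congr rfl fun i _ ↦ prod_congr rfl fun j hj ↦ ?_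
    have := hmono (mem_Ioi.mp hj)
    rw [Nat.cast_sub (hk i), Nat.cast_sub (hk j), Nat.cast_sub this.le]
    ring
  apply mul_right_cancel₀ hΔ
  calc _ = alternatingMultinomialSum (fun i ↦ k - m i) * ∏ i, ((k - m i).factorial : ℤ) := by
        simp_rw [Δ, mul_assoc, ← Nat.cast_mul, ← prod_mul_distrib,
          prod_gaps_mul_prod_Ioi_sub hmono hk]
        push_cast
        rfl
    _ = _ := by
        rw [alternatingMultinomialSum_mul_prod_factorial, hdiff]
        ring

end Gaps

lemma Int.eq_neg_one_pow_mul_natCast_div {D : ℤ} {P M c : ℕ} (hP : P ≠ 0)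
    (h : D * P = (-1) ^ c * M) : D = (-1) ^ c * ((M / P : ℕ) : ℤ) := by
  have hsq : ((-1 : ℤ) ^ c) * (-1) ^ c = 1 := by rw [← mul_pow]; norm_num
  have hM : (M : ℤ) = (-1) ^ c * D * P := by rw [mul_assoc, h, ← mul_assoc, hsq, one_mul]
  rw [Int.natCast_div, hM, Int.mul_ediv_cancel _ (Nat.cast_ne_zero.mpr hP), ← mul_assoc, hsq,
    one_mul]

/-- Theorem 3.2(ii), equation (3.4). -/
theorem stmt14 {R : Type*} [CommRing R] (n k : ℕ)
    (A : Matrix (Fin n) (Fin n) R) (m : Fin n → ℕ)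
    (hmono : StrictMono m) (hk : ∀ i, m i ≤ k) :
    MvPolynomial.coeff (Finsupp.equivFunOnFinite.symm fun _ : Fin n => k)
      (perMatrix (Matrix.of fun i j : Fin n => (C (A i j) * X j ^ m i :
          MvPolynomial (Fin n) R)) *
        (∏ i : Fin n, ∏ j ∈ Finset.Ioi i, (X j - X i)) *
        (∑ s : Fin n, X s) ^ (k * n - n.choose 2 - ∑ i, m i))
      = ((-1 : ℤ) ^ n.choose 2 *
          ((k * n - n.choose 2 - ∑ i, m i).factorial /
            ∏ i : Fin n, ∏ j ∈ (Finset.Ioc (m i) k).filter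
              (fun j => ∀ s : Fin n, i < s → j ≠ m s), (j - m i) : ℕ)) • A.det := by
  have hN : k * n - n.choose 2 - ∑ i, m i = ∑ i, (k - m i) - n.choose 2 := by
    rw [sum_tsub_distrib _ fun i _ ↦ hk i, sum_const, card_univ, Fintype.card_fin, smul_eq_mul,
      mul_comm, Nat.sub_right_comm]
  have hP : (∏ i, ∏ j ∈ (Ioc (m i) k).filter (fun j ↦ ∀ s : Fin n, i < s → j ≠ m s), (j - m i))
      ≠ 0 :=
    prod_ne_zero_iff.mpr fun i _ ↦ prod_ne_zero_iff.mpr fun j hj ↦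
      Nat.sub_ne_zero_of_lt (mem_Ioc.mp (mem_filter.mp hj).1).1
  rw [← det_vandermonde, coeff_const_perMatrix_mul_alternating A m k rename_det_vandermonde_X
    (isSymmetric_sum_X_pow _), hN, coeff_prod_X_pow_mul_det_vandermonde_mul_sum_X_pow _ _ hk,
    Int.eq_neg_one_pow_mul_natCast_div hP (alternatingMultinomialSum_mul_prod_gaps hmono hk),
    zsmul_eq_mul, mul_comm]
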